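/- arXiv:0810.1539 — 2 statements merged into one kernel-verified Lean document; each statement's English description precedes it below -/
import Mathlib

section
/- Let Δ be a (d−1)-dimensional simplicial complex with d ≥ 2 satisfying properties (I)–(III). Then for any S ⊆ {1,…,d} with |S| = 2, the rank-selected subcomplex Δ_S is connected. -/
/-- `Δ` is an (abstract) simplicial complex on the (finite) vertex set `V`:
faces are closed under taking subsets and every singleton is a face. -/
def IsComplex {V : Type*} [DecidableEq V] (Δ : Set (Finset V)) : Prop :=
  (∀ F ∈ Δ, ∀ G, G ⊆ F → G ∈ Δ) ∧ ∀ v : V, ({v} : Finset V) ∈ Δ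

/-- `F` is a facet (maximal face) of the collection of faces `Δ`. -/
def IsFacet {V : Type*} (Δ : Set (Finset V)) (F : Finset V) : Prop :=
  F ∈ Δ ∧ ∀ G ∈ Δ, F ⊆ G → G = F

/-- Every facet has `d` vertices, i.e. dimension `d - 1`. -/
def IsPure {V : Type*} (Δ : Set (Finset V)) (d : ℕ) : Prop :=
  ∀ F, IsFacet Δ F → F.card = d

/-- `Δ` has dimension `d - 1`: all faces have at most `d` vertices and some face has `d`. -/
def HasDim {V : Type*} (Δ : Set (Finset V)) (d : ℕ) : Prop :=
  (∀ F ∈ Δ, F.card ≤ d) ∧ ∃ F ∈ Δ, F.card = d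

/-- The link of the face `F`. -/
def link {V : Type*} [DecidableEq V] (Δ : Set (Finset V)) (F : Finset V) : Set (Finset V) :=
  {G | G ∈ Δ ∧ Disjoint F G ∧ F ∪ G ∈ Δ}

/-- The closed star of the face `F`. -/
def closedStar {V : Type*} [DecidableEq V] (Δ : Set (Finset V)) (F : Finset V) :
    Set (Finset V) :=
  {G | G ∈ Δ ∧ F ∪ G ∈ Δ}

/-- The collection of faces `K` is connected: any two of its vertices are joined by a
walk along its `1`-dimensional faces. -/
def Conn {V : Type*} [DecidableEq V] (K : Set (Finset V)) : Prop :=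
  ∀ v w : V, ({v} : Finset V) ∈ K → ({w} : Finset V) ∈ K →
    Relation.ReflTransGen (fun a b => ({a, b} : Finset V) ∈ K) v w

/-- Property (III): the link of every face with fewer than `d - 1` vertices
(including the empty face) is connected. -/
def LinksConn {V : Type*} [DecidableEq V] (Δ : Set (Finset V)) (d : ℕ) : Prop :=
  ∀ F ∈ Δ, F.card < d - 1 → Conn (link Δ F)

/-- Property (II): `Δ` is balanced with respect to the coloring `κ`:
the coloring is injective on every face. -/
def IsBalanced {V : Type*} {d : ℕ} (Δ : Set (Finset V)) (κ : V → Fin d) : Prop :=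
  ∀ F ∈ Δ, Set.InjOn κ ↑F

/-- The rank-selected subcomplex `Δ_S`. -/
def rankSel {V : Type*} {d : ℕ} (Δ : Set (Finset V)) (κ : V → Fin d) (S : Finset (Fin d)) :
    Set (Finset V) :=
  {F | F ∈ Δ ∧ ∀ v ∈ F, κ v ∈ S}

/-- `Δ` is strongly connected: any two facets are joined by a chain of facets
in which consecutive facets share `d - 1` vertices. -/
def StronglyConnected {V : Type*} [DecidableEq V] (Δ : Set (Finset V)) (d : ℕ) : Prop :=
  ∀ F F', IsFacet Δ F → IsFacet Δ F' →
    Relation.ReflTransGen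
      (fun A B => IsFacet Δ A ∧ IsFacet Δ B ∧ (A ∩ B).card = d - 1) F F'

/-! Write `Δ_U` for the subcomplex induced on a vertex set `U`, so that `Δ_S` is `Δ_U` for
`U = κ⁻¹(S)`. As `κ` maps each facet bijectively onto the `d` colours, this `U` meets every
facet in at least two vertices, and that is all we use; we induct on `d`. Two `U`-vertices in
the closed star of a vertex `a` are joined inside `Δ_U`: through `a` if `a ∈ U`, and otherwise
inside the link of `a`, which inherits all the hypotheses with `d - 1` in place of `d` (and
`d - 1 ≥ 2` because a facet through `a` has two further vertices in `U`). Now follow an edge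
path of `Δ`, connected as the link of `∅`: every edge lies in a face with a `U`-vertex, and
the star property carries the connection from one edge to the next. -/

theorem exists_isFacet_superset {V : Type*} [Finite V] {Δ : Set (Finset V)} {F : Finset V}
    (hF : F ∈ Δ) : ∃ G, IsFacet Δ G ∧ F ⊆ G := by
  obtain ⟨G, hFG, hG⟩ := Set.toFinite Δ |>.exists_le_maximal hF
  exact ⟨G, ⟨hG.prop, fun H hH hGH => le_antisymm (hG.2 hH hGH) hGH⟩, hFG⟩

section Link

variable {V : Type*} [DecidableEq V] {Δ : Set (Finset V)} {F G P : Finset V} {d : ℕ}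

theorem link_empty (Δ : Set (Finset V)) : link Δ ∅ = Δ := by
  ext G
  simp [link]

theorem link_subset (Δ : Set (Finset V)) (F : Finset V) : link Δ F ⊆ Δ :=
  fun _ hG => hG.1

theorem IsLowerSet.link (hΔ : IsLowerSet Δ) (F : Finset V) : IsLowerSet (link Δ F) :=
  fun _ _ hGH ⟨hH, hdisj, hu⟩ =>
    ⟨hΔ hGH hH, hdisj.mono_right hGH, hΔ (Finset.union_subset_union_right hGH) hu⟩

theorem link_link (hΔ : IsLowerSet Δ) (hP : P ∈ link Δ F) :
    link (link Δ F) P = link Δ (F ∪ P) := by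
  ext Q
  simp only [link, Set.mem_ofPred_eq, Finset.disjoint_union_left, Finset.disjoint_union_right,
    Finset.union_assoc]
  constructor
  · rintro ⟨⟨hQ, hFQ, -⟩, hPQ, -, -, hFPQ⟩
    exact ⟨hQ, ⟨hFQ, hPQ⟩, hFPQ⟩
  · rintro ⟨hQ, ⟨hFQ, hPQ⟩, hFPQ⟩
    exact ⟨⟨hQ, hFQ, hΔ (Finset.union_subset_union_right Finset.subset_union_right) hFPQ⟩, hPQ,
      hΔ Finset.subset_union_right hFPQ, ⟨hP.2.1, hFQ⟩, hFPQ⟩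

theorem IsFacet.union_of_link (hΔ : IsLowerSet Δ) (hG : IsFacet (link Δ F) G) :
    IsFacet Δ (F ∪ G) := by
  obtain ⟨⟨-, hFG, hFGΔ⟩, hmax⟩ := hG
  refine ⟨hFGΔ, fun H hH hsub => ?_⟩
  have hFH : F ⊆ H := Finset.union_subset_left hsub
  have hHF : H \ F ∈ link Δ F :=
    ⟨hΔ Finset.sdiff_subset hH, Finset.disjoint_sdiff, by rwa [Finset.union_sdiff_of_subset hFH]⟩
  have hGH : G ⊆ H \ F :=
    Finset.subset_sdiff.mpr ⟨Finset.union_subset_right hsub, hFG.symm⟩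
  rw [← Finset.union_sdiff_of_subset hFH, hmax _ hHF hGH]

theorem IsPure.link (hΔ : IsLowerSet Δ) (hpure : IsPure Δ d) : IsPure (link Δ F) (d - F.card) :=
  fun G hG => by
    have hcard := hpure _ (hG.union_of_link hΔ)
    rw [Finset.card_union_of_disjoint hG.1.2.1] at hcard
    omega

theorem LinksConn.link (hΔ : IsLowerSet Δ) (hlinks : LinksConn Δ d) :
    LinksConn (link Δ F) (d - F.card) := by
  intro P hP hcard
  rw [link_link hΔ hP]
  refine hlinks _ hP.2.2 ?_
  rw [Finset.card_union_of_disjoint hP.2.1]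
  omega

theorem LinksConn.conn (hΔ : IsLowerSet Δ) (hlinks : LinksConn Δ d) (hd : 2 ≤ d) : Conn Δ := by
  intro v w hv
  have hconn := hlinks ∅ (hΔ (Finset.empty_subset _) hv) (by simp only [Finset.card_empty]; omega)
  rw [link_empty] at hconn
  exact hconn v w hv

end Link

def inducedSubcomplex {V : Type*} (Δ : Set (Finset V)) (U : Set V) : Set (Finset V) :=
  {F | F ∈ Δ ∧ ↑F ⊆ U}

theorem inducedSubcomplex_mono {V : Type*} {Δ Δ' : Set (Finset V)} {U : Set V} (h : Δ ⊆ Δ') :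
    inducedSubcomplex Δ U ⊆ inducedSubcomplex Δ' U :=
  fun _ hF => ⟨h hF.1, hF.2⟩

section Induced

variable {V : Type*} [DecidableEq V] {Δ : Set (Finset V)} {U : Set V}

def EdgeReachable (K : Set (Finset V)) : V → V → Prop :=
  Relation.ReflTransGen fun a b => ({a, b} : Finset V) ∈ K

theorem EdgeReachable.mono {K K' : Set (Finset V)} (hK : K ⊆ K') {v w : V}
    (h : EdgeReachable K v w) : EdgeReachable K' v w :=
  Relation.ReflTransGen.mono (fun _ _ hab => hK hab) _ _ h

theorem mem_inducedSubcomplex_pair {a b : V} (hab : ({a, b} : Finset V) ∈ Δ) (ha : a ∈ U)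
    (hb : b ∈ U) : ({a, b} : Finset V) ∈ inducedSubcomplex Δ U :=
  ⟨hab, by simp [Set.insert_subset_iff, ha, hb]⟩

theorem conn_inducedSubcomplex_of_edgeReachable_star (hΔ : IsLowerSet Δ) (hconn : Conn Δ)
    (hedge : ∀ b c : V, ({b, c} : Finset V) ∈ Δ → ∃ z ∈ U, insert z ({b, c} : Finset V) ∈ Δ)
    (hstar : ∀ a x y : V, ({a, x} : Finset V) ∈ Δ → ({a, y} : Finset V) ∈ Δ → x ∈ U → y ∈ U →
      EdgeReachable (inducedSubcomplex Δ U) x y) :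
    Conn (inducedSubcomplex Δ U) := by
  rintro v w ⟨hv, hvU⟩ ⟨hw, hwU⟩
  rw [Finset.coe_singleton, Set.singleton_subset_iff] at hvU hwU
  suffices h : ∀ c, Relation.ReflTransGen (fun a b => ({a, b} : Finset V) ∈ Δ) v c →
      ∀ x ∈ U, ({c, x} : Finset V) ∈ Δ → EdgeReachable (inducedSubcomplex Δ U) v x from
    h w (hconn v w hv hw) w hwU (by simpa using hw)
  intro c hvc
  induction hvc with
  | refl => exact fun x hx hvx => hstar v v x (by simpa using hv) hvx hvU hx
  | @tail b c _ hbc ih =>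
    intro x hx hcx
    obtain ⟨z, hz, hbcz⟩ := hedge b c hbc
    have hbz : ({b, z} : Finset V) ∈ Δ := hΔ (by simp [Finset.insert_subset_iff]) hbcz
    have hcz : ({c, z} : Finset V) ∈ Δ := hΔ (by simp [Finset.insert_subset_iff]) hbcz
    exact (ih z hz hbz).trans (hstar c z x hcz hcx hz hx)

theorem exists_insert_mem [Finite V] (hΔ : IsLowerSet Δ)
    (hU : ∀ F, IsFacet Δ F → ((F : Set V) ∩ U).Nonempty) {E : Finset V} (hE : E ∈ Δ) :
    ∃ z ∈ U, insert z E ∈ Δ := by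
  obtain ⟨H, hH, hEH⟩ := exists_isFacet_superset hE
  obtain ⟨z, hzH, hzU⟩ := hU H hH
  exact ⟨z, hzU, hΔ (Finset.insert_subset hzH hEH) hH.1⟩

theorem edgeReachable_of_mem_star (hΔ : IsLowerSet Δ)
    (hlink : ∀ a, a ∉ U → ({a} : Finset V) ∈ Δ → Conn (inducedSubcomplex (link Δ {a}) U))
    {a x y : V} (hx : ({a, x} : Finset V) ∈ Δ) (hy : ({a, y} : Finset V) ∈ Δ) (hxU : x ∈ U)
    (hyU : y ∈ U) : EdgeReachable (inducedSubcomplex Δ U) x y := by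
  by_cases ha : a ∈ U
  · exact .tail (.single (mem_inducedSubcomplex_pair (by rwa [Finset.pair_comm]) hxU ha))
      (mem_inducedSubcomplex_pair hy ha hyU)
  have hvertex : ∀ z ∈ U, ({a, z} : Finset V) ∈ Δ → {z} ∈ inducedSubcomplex (link Δ {a}) U := by
    intro z hzU haz
    have hza : z ≠ a := fun h => ha (h ▸ hzU)
    refine ⟨⟨hΔ (by simp) haz, Finset.disjoint_singleton.mpr hza.symm, ?_⟩, by simpa⟩
    rwa [← Finset.insert_eq]
  exact EdgeReachable.mono (inducedSubcomplex_mono (link_subset Δ {a}))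
    (hlink a ha (hΔ (by simp) hx) x y (hvertex x hxU hx) (hvertex y hyU hy))

theorem nontrivial_inter_of_isFacet_link (hΔ : IsLowerSet Δ) {F : Finset V}
    (hFU : Disjoint (F : Set V) U) (hU : ∀ G, IsFacet Δ G → ((G : Set V) ∩ U).Nontrivial)
    {G : Finset V} (hG : IsFacet (link Δ F) G) : ((G : Set V) ∩ U).Nontrivial := by
  refine (hU _ (hG.union_of_link hΔ)).mono ?_
  rintro z ⟨hz, hzU⟩
  rw [Finset.coe_union, Set.mem_union] at hz
  exact ⟨hz.resolve_left fun hzF => hFU.notMem_of_mem_left hzF hzU, hzU⟩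

theorem conn_inducedSubcomplex [Finite V] {d : ℕ} (hΔ : IsLowerSet Δ) (hd : 2 ≤ d)
    (hpure : IsPure Δ d) (hlinks : LinksConn Δ d)
    (hU : ∀ F, IsFacet Δ F → ((F : Set V) ∩ U).Nontrivial) :
    Conn (inducedSubcomplex Δ U) := by
  induction d using Nat.strong_induction_on generalizing Δ with
  | _ d ih =>
  refine conn_inducedSubcomplex_of_edgeReachable_star hΔ (hlinks.conn hΔ hd) ?_
    fun a x y hx hy => edgeReachable_of_mem_star hΔ ?_ hx hy
  · exact fun b c hbc => exists_insert_mem hΔ (fun F hF => (hU F hF).nonempty) hbc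
  · intro a ha haΔ
    obtain ⟨F, hF, haF⟩ := exists_isFacet_superset haΔ
    have hUF : ((F.erase a : Finset V) : Set V).Nontrivial :=
      (hU F hF).mono fun z ⟨hzF, hzU⟩ =>
        Finset.mem_erase.mpr ⟨fun hza => ha (hza ▸ hzU), hzF⟩
    have hcard := Finset.one_lt_card_iff_nontrivial.mpr hUF
    rw [Finset.card_erase_of_mem (haF (Finset.mem_singleton_self a)), hpure F hF] at hcard
    have hpure' := hpure.link hΔ (F := {a})
    have hlinks' := hlinks.link hΔ (F := {a})
    rw [Finset.card_singleton] at hpure' hlinks'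
    exact ih (d - 1) (by omega) (hΔ.link {a}) (by omega) hpure' hlinks'
      fun G hG => nontrivial_inter_of_isFacet_link hΔ (by simpa using ha) hU hG

end Induced

theorem nontrivial_inter_preimage_of_injOn {V : Type*} {d : ℕ} {κ : V → Fin d} {F : Finset V}
    (hinj : Set.InjOn κ F) (hcard : F.card = d) {S : Finset (Fin d)} (hS : 1 < S.card) :
    ((F : Set V) ∩ κ ⁻¹' S).Nontrivial := by
  obtain ⟨i, hi, j, hj, hij⟩ := Finset.one_lt_card.mp hS
  have himage : F.image κ = Finset.univ := Finset.eq_univ_of_card _ <| by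
    rw [Finset.card_image_of_injOn hinj, hcard, Fintype.card_fin]
  obtain ⟨x, hx, rfl⟩ := Finset.mem_image.mp (himage ▸ Finset.mem_univ i)
  obtain ⟨y, hy, rfl⟩ := Finset.mem_image.mp (himage ▸ Finset.mem_univ j)
  exact ⟨x, ⟨hx, hi⟩, y, ⟨hy, hj⟩, fun hxy => hij (congrArg κ hxy)⟩

theorem rankSel_connected_general {V : Type*} [Fintype V] [DecidableEq V] (d : ℕ)
    (hd : 2 ≤ d) (Δ : Set (Finset V)) (κ : V → Fin d)
    (hcplx : IsComplex Δ)
    (hI : IsPure Δ d) (hII : IsBalanced Δ κ) (hIII : LinksConn Δ d)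
    (S : Finset (Fin d)) (hS : S.card = 2) :
    Conn (rankSel Δ κ S) :=
  conn_inducedSubcomplex (fun _ _ hGF hF => hcplx.1 _ hF _ hGF) hd hI hIII fun F hF =>
    nontrivial_inter_preimage_of_injOn (hII F hF.1) (hI F hF) (by omega)

/-- If `Δ` is a `(d-1)`-dimensional simplicial complex, `d ≥ 2`,
satisfying properties (I)–(III), then for every set `S` of two colors the rank-selected
subcomplex `Δ_S` is connected. -/
theorem rankSel_connected {V : Type*} [Fintype V] [DecidableEq V] (d : ℕ)
    (hd : 2 ≤ d) (Δ : Set (Finset V)) (κ : V → Fin d)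
    (hcplx : IsComplex Δ) (hdim : HasDim Δ d)
    (hI : IsPure Δ d) (hII : IsBalanced Δ κ) (hIII : LinksConn Δ d)
    (S : Finset (Fin d)) (hS : S.card = 2) :
    Conn (rankSel Δ κ S) :=
  rankSel_connected_general d hd Δ κ hcplx hI hII hIII S hS
end

section
/- Let P be a simplicial poset of rank d ≥ 2 satisfying properties (i)–(iii). Then P is strongly connected: for all facets σ, σ′ ∈ P there is a chain of facets σ = σ_0, σ_1, …, σ_m = σ′ and faces τ_0, …, τ_{m−1} of rank d−1 such that τ_i is covered by both σ_i and σ_{i+1} for all 0 ≤ i ≤ m−1. -/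
/-!
Induct on the corank of a face `τ`, proving that the facets above `τ` are strongly connected.
If `rk τ ≥ d - 1`, purity makes every facet above `τ` equal to `τ` or a cover of it. Otherwise
pick vertices `v ≤ σ` and `w ≤ σ'` of the link of `τ` and join them by a path in the link;
the induction hypothesis at each vertex of the path, together with a facet above each edge,
strings the facets together. The theorem is the case `τ = ⊥`.
-/

/-- `P` (a finite poset with least element `⊥`) is a simplicial poset with rank
function `rk`: every lower interval `[⊥, x]` is isomorphic to the Boolean lattice of
subsets of an `rk x`-element set. -/
def IsSimplicialPoset (P : Type*) [PartialOrder P] [OrderBot P] (rk : P → ℕ) : Prop :=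
  ∀ x : P, Nonempty (Set.Icc (⊥ : P) x ≃o Finset (Fin (rk x)))

/-- `P` has rank `d`. -/
def PosetRank {P : Type*} (rk : P → ℕ) (d : ℕ) : Prop :=
  (∀ x : P, rk x ≤ d) ∧ ∃ x : P, rk x = d

/-- Property (i): `P` is pure, i.e. every facet (maximal element) has rank `d`. -/
def PosetPure {P : Type*} [PartialOrder P] (rk : P → ℕ) (d : ℕ) : Prop :=
  ∀ x : P, IsMax x → rk x = d

/-- Property (ii): `P` is balanced with respect to the coloring `κ` of its vertices
by `d` colors: distinct vertices lying below a common facet receive distinct colors. -/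
def PosetBalanced {P : Type*} [PartialOrder P] {d : ℕ} (rk : P → ℕ) (κ : P → Fin d) :
    Prop :=
  ∀ σ : P, IsMax σ → ∀ v w : P, rk v = 1 → rk w = 1 → v ≤ σ → w ≤ σ → v ≠ w → κ v ≠ κ w

/-- The link `lk_P τ = {σ ∈ P : σ ≥ τ}` is connected: any two of its vertices (the
elements of rank `rk τ + 1` above `τ`) are joined by a path of rank-2 elements of the
link (the elements of rank `rk τ + 2` above `τ`). -/
def ConnAbove {P : Type*} [PartialOrder P] (rk : P → ℕ) (τ : P) : Prop :=
  ∀ v w : P, τ < v → rk v = rk τ + 1 → τ < w → rk w = rk τ + 1 →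
    Relation.ReflTransGen
      (fun a b => τ < a ∧ τ < b ∧ rk a = rk τ + 1 ∧ rk b = rk τ + 1 ∧
        ∃ e : P, a ≤ e ∧ b ≤ e ∧ rk e = rk τ + 2) v w

/-- Property (iii): the link of every face of rank `< d - 1` (including `⊥`, so in
particular `P` itself) is connected. -/
def PosetLinksConn {P : Type*} [PartialOrder P] (rk : P → ℕ) (d : ℕ) : Prop :=
  ∀ σ : P, rk σ < d - 1 → ConnAbove rk σ

namespace IsSimplicialPoset

variable {P : Type*} [PartialOrder P] [OrderBot P] {rk : P → ℕ}

lemma nat_card_Icc_bot (hSP : IsSimplicialPoset P rk) (x : P) :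
    Nat.card (Set.Icc (⊥ : P) x) = 2 ^ rk x := by
  rw [Nat.card_congr (hSP x).some.toEquiv, Nat.card_eq_fintype_card, Fintype.card_finset,
    Fintype.card_fin]

lemma rk_eq_card (hSP : IsSimplicialPoset P rk) {x : P}
    (f : Set.Icc (⊥ : P) x ≃o Finset (Fin (rk x))) (y : Set.Icc (⊥ : P) x) :
    rk y = (f y).card := by
  let e : Set.Icc (⊥ : P) y ≃ Set.Iic (f y) :=
    { toFun := fun z => ⟨f ⟨z, bot_le, z.2.2.trans y.2.2⟩, f.monotone z.2.2⟩
      invFun := fun s => ⟨f.symm s, (f.symm s).2.1, f.symm_apply_le.mpr s.2⟩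
      left_inv := fun z => by simp
      right_inv := fun s => Subtype.ext (f.apply_symm_apply s) }
  apply Nat.pow_right_injective le_rfl
  change 2 ^ rk y = 2 ^ _
  rw [← nat_card_Icc_bot hSP, Nat.card_congr e, ← Finset.card_Iic_finset, ← Finset.coe_Iic,
    Nat.card_coe_set_eq, Set.ncard_coe_finset]

lemma rk_strictMono (hSP : IsSimplicialPoset P rk) : StrictMono rk := by
  intro x y hxy
  obtain ⟨f⟩ := hSP y
  have hx : rk x = _ := hSP.rk_eq_card f ⟨x, bot_le, hxy.le⟩
  have hy : rk y = _ := hSP.rk_eq_card f ⟨y, bot_le, le_rfl⟩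
  have hlt : f ⟨x, bot_le, hxy.le⟩ < f ⟨y, bot_le, le_rfl⟩ := f.strictMono hxy
  have := Finset.card_lt_card hlt
  omega

lemma exists_rk_eq_add_one (hSP : IsSimplicialPoset P rk) {x y : P} (hxy : x ≤ y)
    (hr : rk x < rk y) : ∃ v, x < v ∧ v ≤ y ∧ rk v = rk x + 1 := by
  obtain ⟨f⟩ := hSP y
  have hx : rk x = _ := hSP.rk_eq_card f ⟨x, bot_le, hxy⟩
  have hy : rk y = _ := hSP.rk_eq_card f ⟨y, bot_le, le_rfl⟩
  have hst : f ⟨x, bot_le, hxy⟩ ⊆ f ⟨y, bot_le, le_rfl⟩ := f.monotone hxy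
  obtain ⟨u, hsu, -, hu⟩ :=
    Finset.exists_subsuperset_card_eq hst (Nat.le_add_right _ 1) (by omega)
  have hv : rk (f.symm u : P) = rk x + 1 := by
    rw [hSP.rk_eq_card f, hx, ← hu, f.apply_symm_apply]
  have hxv : x ≤ f.symm u := f.le_symm_apply.mpr hsu
  exact ⟨f.symm u, hxv.lt_of_ne (by rintro rfl; omega), (f.symm u).2.2, hv⟩

end IsSimplicialPoset

lemma StrictMono.covBy_of_apply_eq_add_one {α : Type*} [Preorder α] {f : α → ℕ}
    (hf : StrictMono f) {x y : α} (hxy : x < y) (hfxy : f y = f x + 1) : x ⋖ y :=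
  ⟨hxy, fun _ hxz hzy => by have := hf hxz; have := hf hzy; omega⟩

lemma Finite.exists_le_isMax {α : Type*} [Preorder α] [Finite α] (a : α) :
    ∃ b, a ≤ b ∧ IsMax b := by
  obtain ⟨b, hab, hb⟩ := Finite.exists_le_maximal (p := fun _ : α => True) trivial (a := a)
  exact ⟨b, hab, fun _ hbc => hb.2 trivial hbc⟩

section StrongConnectivity

variable {P : Type*} [PartialOrder P] {rk : P → ℕ} {d : ℕ}

def FacetAdj (rk : P → ℕ) (d : ℕ) (σ σ' : P) : Prop :=
  IsMax σ ∧ IsMax σ' ∧ ∃ τ : P, rk τ = d - 1 ∧ τ ⋖ σ ∧ τ ⋖ σ'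

def FacetsConnectedAbove (rk : P → ℕ) (d : ℕ) (τ : P) : Prop :=
  ∀ σ σ' : P, IsMax σ → IsMax σ' → τ ≤ σ → τ ≤ σ' →
    Relation.ReflTransGen (FacetAdj rk d) σ σ'

variable [OrderBot P]

lemma facetsConnectedAbove_of_le_rk (hSP : IsSimplicialPoset P rk) (hpure : PosetPure rk d)
    {τ : P} (hτ : d - 1 ≤ rk τ) : FacetsConnectedAbove rk d τ := by
  intro σ σ' hσ hσ' hτσ hτσ'
  by_cases hτmax : IsMax τ
  · rw [← hτmax.eq_of_le hτσ, ← hτmax.eq_of_le hτσ']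
  have hτσ : τ < σ := hτσ.lt_of_ne (by rintro rfl; exact hτmax hσ)
  have hτσ' : τ < σ' := hτσ'.lt_of_ne (by rintro rfl; exact hτmax hσ')
  have hrσ := hpure σ hσ
  have hrσ' := hpure σ' hσ'
  have := hSP.rk_strictMono hτσ
  refine .single ⟨hσ, hσ', τ, by omega, ?_, ?_⟩
  · exact hSP.rk_strictMono.covBy_of_apply_eq_add_one hτσ (by omega)
  · exact hSP.rk_strictMono.covBy_of_apply_eq_add_one hτσ' (by omega)

lemma facetsConnectedAbove_of_connAbove [Finite P] (hSP : IsSimplicialPoset P rk)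
    (hpure : PosetPure rk d) {τ : P} (hτ : rk τ < d) (hlink : ConnAbove rk τ)
    (hvert : ∀ v, τ < v → rk v = rk τ + 1 → FacetsConnectedAbove rk d v) :
    FacetsConnectedAbove rk d τ := by
  intro σ σ' hσ hσ' hτσ hτσ'
  obtain ⟨v, hτv, hvσ, hv⟩ := hSP.exists_rk_eq_add_one hτσ (hpure σ hσ ▸ hτ)
  obtain ⟨w, hτw, hwσ', hw⟩ := hSP.exists_rk_eq_add_one hτσ' (hpure σ' hσ' ▸ hτ)
  suffices ∀ u, Relation.ReflTransGen _ v u →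
      ∀ ρ, IsMax ρ → u ≤ ρ → Relation.ReflTransGen (FacetAdj rk d) σ ρ from
    this w (hlink v w hτv hv hτw hw) σ' hσ' hwσ'
  intro u hu
  induction hu with
  | refl => exact fun ρ hρ hvρ => hvert v hτv hv σ ρ hσ hρ hvσ hvρ
  | tail _ hbc ih =>
    -- a facet above the common edge `e` of `b` and `c` links the facets above `b`
    -- to those above `c`
    obtain ⟨-, hτc, -, hc, e, hbe, hce, -⟩ := hbc
    obtain ⟨ρe, heρe, hρe⟩ := Finite.exists_le_isMax e
    intro ρ hρ hcρ
    exact (ih ρe hρe (hbe.trans heρe)).trans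
      (hvert _ hτc hc ρe ρ hρe hρ (hce.trans heρe) hcρ)

theorem facetsConnectedAbove [Finite P] (hSP : IsSimplicialPoset P rk)
    (hpure : PosetPure rk d) (hlinks : PosetLinksConn rk d) (τ : P) :
    FacetsConnectedAbove rk d τ := by
  by_cases hτ : d - 1 ≤ rk τ
  · exact facetsConnectedAbove_of_le_rk hSP hpure hτ
  · exact facetsConnectedAbove_of_connAbove hSP hpure (by omega) (hlinks τ (by omega))
      fun v _ _ => facetsConnectedAbove hSP hpure hlinks v
termination_by d - rk τ

end StrongConnectivity

theorem poset_stronglyConnected_general {P : Type*} [Fintype P] [PartialOrder P] [OrderBot P]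
    (rk : P → ℕ) (d : ℕ) (hSP : IsSimplicialPoset P rk)
    (hi : PosetPure rk d) (hiii : PosetLinksConn rk d) :
    ∀ σ σ' : P, IsMax σ → IsMax σ' →
      Relation.ReflTransGen
        (fun a b => IsMax a ∧ IsMax b ∧ ∃ τ : P, rk τ = d - 1 ∧ τ ⋖ a ∧ τ ⋖ b) σ σ' :=
  fun σ σ' hσ hσ' => facetsConnectedAbove hSP hi hiii ⊥ σ σ' hσ hσ' bot_le bot_le

/-- A simplicial poset of rank `d ≥ 2` satisfying properties
(i)–(iii) is strongly connected: any two facets are joined by a chain of facets in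
which consecutive facets both cover a common face of rank `d - 1`. -/
theorem poset_stronglyConnected {P : Type*} [Fintype P] [PartialOrder P] [OrderBot P]
    (rk : P → ℕ) (d : ℕ) (hd : 2 ≤ d) (κ : P → Fin d)
    (hSP : IsSimplicialPoset P rk) (hrk : PosetRank rk d)
    (hi : PosetPure rk d) (hii : PosetBalanced rk κ) (hiii : PosetLinksConn rk d) :
    ∀ σ σ' : P, IsMax σ → IsMax σ' →
      Relation.ReflTransGen
        (fun a b => IsMax a ∧ IsMax b ∧ ∃ τ : P, rk τ = d - 1 ∧ τ ⋖ a ∧ τ ⋖ b) σ σ' :=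
  poset_stronglyConnected_general rk d hSP hi hiii
end
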